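/- arXiv:0802.1130 — 5 statements merged into one kernel-verified Lean document; each statement's English description precedes it below -/
import Mathlib

section
/- Let (M,P,g) be a Riemannian almost product manifold with F(x,y,z) = g((∇ₓP)y,z). Then the cyclic sum 𝔖_{x,y,z} F(x,y,z) = 0 holds for all x,y,z if and only if the cyclic sum 𝔖_{x,y,z} F(Px,y,z) = 0 holds for all x,y,z. -/
/-!
The key fact is that `F(x, Py, Pz) = -F(x, y, z)`: since `P` is an involutive isometry of `g`
it is `g`-self-adjoint, and `(∇ₓP)(Py) = ∇ₓy - P∇ₓ(Py) = -P((∇ₓP)y)` because `P² = id`.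
Substituting `Px, Py, Pz` into either cyclic condition therefore turns it into the negative
of the other, because `P` is involutive.
-/

section CyclicSum

variable {A X : Type*} [AddCommGroup A] {F : X → X → X → A} {P : X → X}

theorem cyclicSum_map_eq_zero_of_cyclicSum_eq_zero
    (hF : ∀ x y z, F x (P y) (P z) = -F x y z)
    (h : ∀ x y z, F x y z + F y z x + F z x y = 0) (x y z : X) :
    F (P x) y z + F (P y) z x + F (P z) x y = 0 := by
  have h' := h (P x) (P y) (P z)
  rwa [hF, hF, hF, ← neg_add, ← neg_add, neg_eq_zero] at h'

theorem cyclicSum_eq_zero_iff_cyclicSum_map_eq_zero (hP : Function.Involutive P)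
    (hF : ∀ x y z, F x (P y) (P z) = -F x y z) :
    (∀ x y z, F x y z + F y z x + F z x y = 0) ↔
      (∀ x y z, F (P x) y z + F (P y) z x + F (P z) x y = 0) := by
  refine ⟨cyclicSum_map_eq_zero_of_cyclicSum_eq_zero hF, fun h x y z => ?_⟩
  simpa only [hP _] using
    cyclicSum_map_eq_zero_of_cyclicSum_eq_zero (F := fun x y z => F (P x) y z)
      (fun _ _ _ => hF _ _ _) h x y z

end CyclicSum

section AlmostProduct

variable {A X : Type*} [CommRing A] [AddCommGroup X] [Module A X]
  {g : X →ₗ[A] X →ₗ[A] A} {P : X →ₗ[A] X}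

theorem apply_map_eq_apply_map_of_involutive_isometry (hP2 : ∀ x, P (P x) = x)
    (hPg : ∀ x y, g (P x) (P y) = g x y) (u v : X) : g (P u) v = g u (P v) := by
  rw [← hPg u (P v), hP2]

variable (g P) in
def fundamentalTensor (nabla : X → X → X) (x y z : X) : A :=
  g (nabla x (P y) - P (nabla x y)) z

theorem fundamentalTensor_map_map (hP2 : ∀ x, P (P x) = x)
    (hPg : ∀ x y, g (P x) (P y) = g x y) (nabla : X → X → X) (x y z : X) :
    fundamentalTensor g P nabla x (P y) (P z) = -fundamentalTensor g P nabla x y z := by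
  simp only [fundamentalTensor, hP2, map_sub, LinearMap.sub_apply, hPg,
    apply_map_eq_apply_map_of_involutive_isometry hP2 hPg (nabla x y)]
  abel

end AlmostProduct

theorem cyclic_sum_iff_cyclic_sum_P_general
    {A X : Type*} [CommRing A] [AddCommGroup X] [Module A X]
    (g : X →ₗ[A] X →ₗ[A] A) (P : X →ₗ[A] X)
    (nabla : X → X → X)
    (hP2 : ∀ x : X, P (P x) = x)
    (hPg : ∀ x y : X, g (P x) (P y) = g x y) :
    let nablaP : X → X → X := fun x y => nabla x (P y) - P (nabla x y)
    let F : X → X → X → A := fun x y z => g (nablaP x y) z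
    (∀ x y z : X, F x y z + F y z x + F z x y = 0) ↔
    (∀ x y z : X, F (P x) y z + F (P y) z x + F (P z) x y = 0) :=
  cyclicSum_eq_zero_iff_cyclicSum_map_eq_zero (F := fundamentalTensor g P nabla) hP2
    (fundamentalTensor_map_map hP2 hPg nabla)

/-- Let `(M,P,g)` be a Riemannian almost product manifold (modeled algebraically
with metric `g`, structure `P`, Levi-Civita connection `nabla` and derivation
`D`), and `F(x,y,z) = g((∇ₓP)y,z)`.  Then the cyclic sum
`𝔖_{x,y,z} F(x,y,z) = 0` holds for all `x,y,z` if and only if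
`𝔖_{x,y,z} F(Px,y,z) = 0` holds for all `x,y,z`. -/
theorem cyclic_sum_iff_cyclic_sum_P
    {A X : Type*} [CommRing A] [AddCommGroup X] [Module A X]
    (g : X →ₗ[A] X →ₗ[A] A) (P : X →ₗ[A] X)
    (nabla : X → X → X) (D : X → A → A)
    (hgsymm : ∀ x y : X, g x y = g y x)
    (hP2 : ∀ x : X, P (P x) = x)
    (hPg : ∀ x y : X, g (P x) (P y) = g x y)
    (hcompat : ∀ x y z : X, D x (g y z) = g (nabla x y) z + g y (nabla x z)) :
    let nablaP : X → X → X := fun x y => nabla x (P y) - P (nabla x y)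
    let F : X → X → X → A := fun x y z => g (nablaP x y) z
    (∀ x y z : X, F x y z + F y z x + F z x y = 0) ↔
    (∀ x y z : X, F (P x) y z + F (P y) z x + F (P z) x y = 0) :=
  cyclic_sum_iff_cyclic_sum_P_general g P nabla hP2 hPg
end

section
/- On a Riemannian W₃-manifold, the square norm of ∇P satisfies ‖∇P‖² = −2 g^{ij} g^{kl} g( (∇_{e_i}P)e_k , (∇_{e_l}P)e_j ), where ‖∇P‖² = g^{ij} g^{kl} g( (∇_{e_i}P)e_k , (∇_{e_j}P)e_l ). -/
/-!
Since `P` is an involutive isometry it is `g`-symmetric, and metric compatibility of `∇` then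
makes `F(x, y, z) = g((∇ₓP)y, z)` symmetric in `y, z`. Expanding both inner products in the
basis turns them into contractions of `F ⊗ F`. Using the `W₃` condition and this symmetry,
`F(e_j, e_l, e_n) = -F(e_l, e_j, e_n) - F(e_n, e_j, e_l)`; the second term contributes as much as
the first after exchanging the index pairs `(k, l)` and `(m, n)`, whence the factor `-2`.
-/

open Finset

section Contraction

variable {ι : Type*} [Fintype ι]

theorem sum_sum_sum_sum_swap_pairs {M : Type*} [AddCommMonoid M] (h : ι → ι → ι → ι → M) :
    ∑ k, ∑ l, ∑ m, ∑ n, h k l m n = ∑ k, ∑ l, ∑ m, ∑ n, h m n k l := by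
  calc ∑ k, ∑ l, ∑ m, ∑ n, h k l m n
      = ∑ p : ι × ι, ∑ q : ι × ι, h p.1 p.2 q.1 q.2 := by simp only [Fintype.sum_prod_type]
    _ = ∑ q : ι × ι, ∑ p : ι × ι, h p.1 p.2 q.1 q.2 := Finset.sum_comm
    _ = ∑ k, ∑ l, ∑ m, ∑ n, h m n k l := by simp only [Fintype.sum_prod_type]

theorem sum_contraction_eq_neg_two_mul_of_cyclic (w : ι → ι → ℝ) (f : ι → ι → ι → ℝ)
    (hsymm : ∀ i k m, f i k m = f i m k) (hcyc : ∀ i k m, f i k m + f k m i + f m i k = 0) :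
    ∑ i, ∑ j, ∑ k, ∑ l, ∑ m, ∑ n, w i j * w k l * (w m n * (f i k m * f j l n))
      = -2 * ∑ i, ∑ j, ∑ k, ∑ l, ∑ m, ∑ n, w i j * w k l * (w m n * (f i k m * f l j n)) := by
  have hdecomp : ∀ j l n, f j l n = -f l j n - f n j l := fun j l n => by
    linarith [hcyc j l n, hsymm l n j]
  have hswap : ∀ i j, ∑ k, ∑ l, ∑ m, ∑ n, w i j * w k l * (w m n * (f i k m * f n j l))
      = ∑ k, ∑ l, ∑ m, ∑ n, w i j * w k l * (w m n * (f i k m * f l j n)) := fun i j => by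
    rw [sum_sum_sum_sum_swap_pairs]
    refine sum_congr rfl fun k _ => sum_congr rfl fun l _ =>
      sum_congr rfl fun m _ => sum_congr rfl fun n _ => ?_
    rw [hsymm i m k]
    ring
  calc ∑ i, ∑ j, ∑ k, ∑ l, ∑ m, ∑ n, w i j * w k l * (w m n * (f i k m * f j l n))
      = ∑ i, ∑ j, ∑ k, ∑ l, ∑ m, ∑ n, (-(w i j * w k l * (w m n * (f i k m * f l j n)))
          - w i j * w k l * (w m n * (f i k m * f n j l))) := by
        refine sum_congr rfl fun i _ => sum_congr rfl fun j _ => sum_congr rfl fun k _ =>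
          sum_congr rfl fun l _ => sum_congr rfl fun m _ => sum_congr rfl fun n _ => ?_
        rw [hdecomp j l n]
        ring
    _ = -2 * ∑ i, ∑ j, ∑ k, ∑ l, ∑ m, ∑ n, w i j * w k l * (w m n * (f i k m * f l j n)) := by
        simp only [sum_sub_distrib, sum_neg_distrib, hswap]
        ring

end Contraction

section Bilinear

variable {X : Type*} [AddCommGroup X] [Module ℝ X]

theorem apply_eq_sum_gram_inv {ι : Type*} [Fintype ι] [DecidableEq ι]
    (g : X →ₗ[ℝ] X →ₗ[ℝ] ℝ) (b : Module.Basis ι ℝ X) (ginv : ι → ι → ℝ)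
    (hgsymm : ∀ x y : X, g x y = g y x)
    (hginv : ∀ i k : ι, ∑ j, g (b i) (b j) * ginv j k = if i = k then 1 else 0) (v w : X) :
    g v w = ∑ m, ∑ n, ginv m n * (g v (b m) * g w (b n)) := by
  have hflip : g.flip w = ∑ m, ∑ n, (ginv m n * g w (b n)) • g.flip (b m) := b.ext fun i => by
    calc g (b i) w
        = ∑ n, (if i = n then 1 else 0) * g w (b n) := by simp [hgsymm (b i) w]
      _ = ∑ n, ∑ m, ginv m n * g w (b n) * g (b i) (b m) := by
        refine sum_congr rfl fun n _ => ?_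
        rw [← hginv i n, sum_mul]
        exact sum_congr rfl fun m _ => by ring
      _ = _ := by
        rw [sum_comm]
        simp [LinearMap.sum_apply]
  simpa only [LinearMap.flip_apply, LinearMap.sum_apply, LinearMap.smul_apply, smul_eq_mul,
    mul_assoc, mul_comm (g w _)] using LinearMap.congr_fun hflip v

theorem apply_map_eq_apply_map_of_involutive (g : X →ₗ[ℝ] X →ₗ[ℝ] ℝ) (P : X →ₗ[ℝ] X)
    (hP2 : ∀ x : X, P (P x) = x) (hPg : ∀ x y : X, g (P x) (P y) = g x y) (x y : X) :
    g (P x) y = g x (P y) := by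
  rw [← hPg x (P y), hP2]

theorem apply_covDeriv_map_symm (g : X →ₗ[ℝ] X →ₗ[ℝ] ℝ) (P : X →ₗ[ℝ] X)
    (nabla : X → X → X) (D : X → ℝ → ℝ) (hgsymm : ∀ x y : X, g x y = g y x)
    (hP2 : ∀ x : X, P (P x) = x) (hPg : ∀ x y : X, g (P x) (P y) = g x y)
    (hcompat : ∀ x y z : X, D x (g y z) = g (nabla x y) z + g y (nabla x z)) (x y z : X) :
    g (nabla x (P y) - P (nabla x y)) z = g (nabla x (P z) - P (nabla x z)) y := by
  have hPsymm := apply_map_eq_apply_map_of_involutive g P hP2 hPg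
  have hy := hcompat x (P y) z
  have hz := hcompat x (P z) y
  rw [hPsymm y z, hgsymm y] at hy
  simp only [map_sub, LinearMap.sub_apply, hPsymm]
  rw [hgsymm (nabla x y), hgsymm (nabla x z)]
  linarith [hgsymm (P y) (nabla x z)]

end Bilinear

open Finset in
theorem W3_square_norm_nablaP_general
    {X : Type*} [AddCommGroup X] [Module ℝ X]
    {ι : Type*} [Fintype ι] [DecidableEq ι]
    (g : X →ₗ[ℝ] X →ₗ[ℝ] ℝ) (P : X →ₗ[ℝ] X)
    (nabla : X → X → X) (D : X → ℝ → ℝ)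
    (b : Module.Basis ι ℝ X) (ginv : ι → ι → ℝ)
    (hgsymm : ∀ x y : X, g x y = g y x)
    (hP2 : ∀ x : X, P (P x) = x)
    (hPg : ∀ x y : X, g (P x) (P y) = g x y)
    (hcompat : ∀ x y z : X, D x (g y z) = g (nabla x y) z + g y (nabla x z))
    -- `ginv` is the inverse matrix of the metric in the basis `b`
    (hginv : ∀ i k : ι, ∑ j, g (b i) (b j) * ginv j k = if i = k then 1 else 0) :
    let nablaP : X → X → X := fun x y => nabla x (P y) - P (nabla x y)
    let F : X → X → X → ℝ := fun x y z => g (nablaP x y) z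
    -- the W₃ condition
    (∀ x y z : X, F x y z + F y z x + F z x y = 0) →
    (∑ i, ∑ j, ∑ k, ∑ l,
        ginv i j * ginv k l * g (nablaP (b i) (b k)) (nablaP (b j) (b l)))
      = -2 * ∑ i, ∑ j, ∑ k, ∑ l,
        ginv i j * ginv k l * g (nablaP (b i) (b k)) (nablaP (b l) (b j)) := by
  intro nablaP F hW3
  have hF := sum_contraction_eq_neg_two_mul_of_cyclic ginv (fun i k m => F (b i) (b k) (b m))
    (fun i k m => apply_covDeriv_map_symm g P nabla D hgsymm hP2 hPg hcompat _ _ _)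
    (fun i k m => hW3 (b i) (b k) (b m))
  have hexpand : ∀ i j k l, g (nablaP (b i) (b k)) (nablaP (b j) (b l))
      = ∑ m, ∑ n, ginv m n * (F (b i) (b k) (b m) * F (b j) (b l) (b n)) :=
    fun i j k l => apply_eq_sum_gram_inv g b ginv hgsymm hginv _ _
  simpa only [hexpand, mul_sum] using hF

open Finset in
/-- On a Riemannian `W₃`-manifold, the square norm of `∇P`,
`‖∇P‖² = g^{ij} g^{kl} g((∇_{e_i}P)e_k, (∇_{e_j}P)e_l)`, satisfies
`‖∇P‖² = −2 g^{ij} g^{kl} g((∇_{e_i}P)e_k, (∇_{e_l}P)e_j)`.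
Here `(e_i)` is a basis of the tangent space and `g^{ij}` the components of the
inverse of the metric. -/
theorem W3_square_norm_nablaP
    {X : Type*} [AddCommGroup X] [Module ℝ X]
    {ι : Type*} [Fintype ι] [DecidableEq ι]
    (g : X →ₗ[ℝ] X →ₗ[ℝ] ℝ) (P : X →ₗ[ℝ] X)
    (nabla : X → X → X) (D : X → ℝ → ℝ)
    (b : Module.Basis ι ℝ X) (ginv : ι → ι → ℝ)
    (hgsymm : ∀ x y : X, g x y = g y x)
    (hP2 : ∀ x : X, P (P x) = x)
    (hPg : ∀ x y : X, g (P x) (P y) = g x y)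
    (hcompat : ∀ x y z : X, D x (g y z) = g (nabla x y) z + g y (nabla x z))
    -- `ginv` is the inverse matrix of the metric in the basis `b`
    (hginv : ∀ i k : ι, ∑ j, g (b i) (b j) * ginv j k = if i = k then 1 else 0)
    (hginvsymm : ∀ i j : ι, ginv i j = ginv j i) :
    let nablaP : X → X → X := fun x y => nabla x (P y) - P (nabla x y)
    let F : X → X → X → ℝ := fun x y z => g (nablaP x y) z
    -- the W₃ condition
    (∀ x y z : X, F x y z + F y z x + F z x y = 0) →
    (∑ i, ∑ j, ∑ k, ∑ l,
        ginv i j * ginv k l * g (nablaP (b i) (b k)) (nablaP (b j) (b l)))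
      = -2 * ∑ i, ∑ j, ∑ k, ∑ l,
        ginv i j * ginv k l * g (nablaP (b i) (b k)) (nablaP (b l) (b j)) :=
  W3_square_norm_nablaP_general g P nabla D b ginv hgsymm hP2 hPg hcompat hginv
end

section
/- A Riemannian almost product manifold (M,P,g) has zero invariant bisectional curvature (i.e. R(x,Px,y,Py) = 0 for all x,y) if and only if R(x,Py,Pz,w) − R(x,Py,z,Pw) + R(Px,y,z,Pw) − R(Px,y,Pz,w) = 0 for all vector fields x,y,z,w. -/
/-!
By the antisymmetries of `R`, the second expression is minus the full polarization of the
biquadratic form `(x, y) ↦ R(x,Px,y,Py)`; on the diagonal `x = y`, `z = w` it is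
`-4 R(x,Px,z,Pz)`.
-/

section

variable {K V N : Type*} [CommSemiring K] [AddCommMonoid V] [Module K V]
  [AddCommGroup N] [Module K N]

open LinearMap in
/-- Polarize twice: first `(x, y) ↦ R x (P y) u (P u)` is alternating, and then so is
`(u, v) ↦ (R x (P y) + R y (P x)) u (P v)`. -/
theorem polarization_eq_zero_of_bisectional_eq_zero
    (R : V →ₗ[K] V →ₗ[K] V →ₗ[K] V →ₗ[K] N) (P : V →ₗ[K] V)
    (h : ∀ x y, R x (P x) y (P y) = 0) (x y z w : V) :
    R x (P y) z (P w) + R x (P y) w (P z) + R y (P x) z (P w) + R y (P x) w (P z) = 0 := by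
  have h_first : ∀ u, R x (P y) u (P u) + R y (P x) u (P u) = 0 := fun u => by
    have hAlt : ((R.compl₂ P).compr₂ ((applyₗ (P u)).comp (applyₗ u))).IsAlt := fun v => h v u
    simpa [neg_eq_iff_add_eq_zero] using hAlt.neg x y
  have hAlt : ((R x (P y) + R y (P x)).compl₂ P).IsAlt := fun u => by simpa using h_first u
  have := hAlt.neg z w
  simp only [compl₂_apply, LinearMap.add_apply, neg_eq_iff_add_eq_zero] at this
  rw [← this]
  abel

theorem mixed_eq_neg_polarization
    (R : V →ₗ[K] V →ₗ[K] V →ₗ[K] V →ₗ[K] N) (P : V →ₗ[K] V)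
    (hA1 : ∀ x y z w : V, R x y z w = - R y x z w)
    (hA2 : ∀ x y z w : V, R x y z w = - R x y w z) (x y z w : V) :
    R x (P y) (P z) w - R x (P y) z (P w) + R (P x) y z (P w) - R (P x) y (P z) w =
      -(R x (P y) z (P w) + R x (P y) w (P z) + R y (P x) z (P w) + R y (P x) w (P z)) := by
  rw [hA2 x (P y) (P z) w, hA1 (P x) y z (P w), hA1 (P x) y (P z) w, hA2 y (P x) (P z) w]
  abel

end

open RealInnerProductSpace in
theorem zero_invariant_bisectional_curvature_iff_general
    {V : Type*} [NormedAddCommGroup V] [InnerProductSpace ℝ V]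
    (P : V →ₗ[ℝ] V)
    (R4 : V →ₗ[ℝ] V →ₗ[ℝ] V →ₗ[ℝ] V →ₗ[ℝ] ℝ)
    -- symmetries of the Riemann curvature tensor
    (hA1 : ∀ x y z w : V, R4 x y z w = - R4 y x z w)
    (hA2 : ∀ x y z w : V, R4 x y z w = - R4 x y w z) :
    (∀ x y : V, R4 x (P x) y (P y) = 0) ↔
    (∀ x y z w : V,
      R4 x (P y) (P z) w - R4 x (P y) z (P w)
        + R4 (P x) y z (P w) - R4 (P x) y (P z) w = 0) := by
  constructor
  · intro h x y z w
    rw [mixed_eq_neg_polarization R4 P hA1 hA2,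
      polarization_eq_zero_of_bisectional_eq_zero R4 P h, neg_zero]
  · intro h x y
    have h_diag := h x x y y
    rw [mixed_eq_neg_polarization R4 P hA1 hA2] at h_diag
    linarith

open RealInnerProductSpace in
/-- Theorem 3.2 of the paper.  A Riemannian almost product manifold `(M,P,g)`
has zero invariant bisectional curvature, i.e. `R(x,Px,y,Py) = 0` for all
`x,y`, if and only if
`R(x,Py,Pz,w) − R(x,Py,z,Pw) + R(Px,y,z,Pw) − R(Px,y,Pz,w) = 0`
for all `x,y,z,w`. -/
theorem zero_invariant_bisectional_curvature_iff
    {V : Type*} [NormedAddCommGroup V] [InnerProductSpace ℝ V]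
    (P : V →ₗ[ℝ] V)
    (R4 : V →ₗ[ℝ] V →ₗ[ℝ] V →ₗ[ℝ] V →ₗ[ℝ] ℝ)
    (hP2 : ∀ x : V, P (P x) = x)
    (hPg : ∀ x y : V, ⟪P x, P y⟫ = ⟪x, y⟫)
    -- symmetries of the Riemann curvature tensor
    (hA1 : ∀ x y z w : V, R4 x y z w = - R4 y x z w)
    (hA2 : ∀ x y z w : V, R4 x y z w = - R4 x y w z)
    (hpair : ∀ x y z w : V, R4 x y z w = R4 z w x y)
    (hBianchi : ∀ x y z w : V, R4 x y z w + R4 y z x w + R4 z x y w = 0) :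
    (∀ x y : V, R4 x (P x) y (P y) = 0) ↔
    (∀ x y z w : V,
      R4 x (P y) (P z) w - R4 x (P y) z (P w)
        + R4 (P x) y z (P w) - R4 (P x) y (P z) w = 0) :=
  zero_invariant_bisectional_curvature_iff_general P R4 hA1 hA2
end

section
/- Let (M,P,g) be a Riemannian W₃-manifold and ∇̃ the Levi-Civita connection of the associated metric g̃(x,y) = g(x,Py). Then (∇̃ₓP)y = (∇_{Px}P)Py, and consequently F̃(x,y,z) := g̃((∇̃ₓP)y,z) = −F(Px,y,z). -/
/-! Write `A x y = (∇ₓP)y`. Since `P² = id`, differentiating gives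
`P ∘ (∇ₓP) = -(∇ₓP) ∘ P`. Expanding `(∇̃ₓP)y` with the formula for `∇̃` and moving every `P`
to the right by this anticommutation leaves `-(A x y + A y x + A (Py) (Px))`, which is
`A (Px) (Py)` because `N̄(Px, y) = 0`. The formula for `F̃` follows by anticommuting once more
and using `P`-invariance of `g`. -/

section

variable {R X : Type*} [Semiring R] [AddCommGroup X] [Module R X]

-- `derivEndo ∇ P x y = (∇ₓP)y`
def derivEndo (nabla : X → X → X) (P : X →ₗ[R] X) (x y : X) : X :=
  nabla x (P y) - P (nabla x y)

variable {nabla : X → X → X} {P : X →ₗ[R] X}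

theorem map_derivEndo (hP2 : ∀ x, P (P x) = x) (x y : X) :
    P (derivEndo nabla P x y) = -derivEndo nabla P x (P y) := by
  simp only [derivEndo, map_sub, hP2]
  abel

theorem derivEndo_map_eq_neg_map (hP2 : ∀ x, P (P x) = x) (x y : X) :
    derivEndo nabla P x (P y) = -P (derivEndo nabla P x y) := by
  rw [map_derivEndo hP2, neg_neg]

theorem derivEndo_of_nbar_eq_zero {tnabla : X → X → X} (hP2 : ∀ x, P (P x) = x)
    (hN : ∀ x y, derivEndo nabla P x (P y) + derivEndo nabla P (P x) y
      + derivEndo nabla P y (P x) + derivEndo nabla P (P y) x = 0)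
    (htnabla : ∀ x y, tnabla x y
      = nabla x y - derivEndo nabla P x (P y) - derivEndo nabla P y (P x))
    (x y : X) :
    derivEndo tnabla P x y = derivEndo nabla P (P x) (P y) := by
  have hanti : ∀ x y, P (derivEndo nabla P x (P y)) = -derivEndo nabla P x y := fun x y => by
    rw [map_derivEndo hP2, hP2]
  have hexpand : derivEndo tnabla P x y
      = -(derivEndo nabla P x y + derivEndo nabla P y x + derivEndo nabla P (P y) (P x)) := by
    unfold derivEndo
    rw [htnabla, htnabla, map_sub, map_sub, hanti, hanti]
    simp only [derivEndo, hP2]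
    abel
  rw [hexpand, neg_eq_iff_eq_neg, eq_neg_iff_add_eq_zero, ← hN (P x) y, hP2]
  abel

end

theorem associated_nablaP_and_F_general
    {X : Type*} [AddCommGroup X] [Module ℝ X]
    (g : X →ₗ[ℝ] X →ₗ[ℝ] ℝ) (P : X →ₗ[ℝ] X)
    (nabla tnabla : X → X → X)
    (hP2 : ∀ x : X, P (P x) = x)
    (hPg : ∀ x y : X, g (P x) (P y) = g x y) :
    let nablaP : X → X → X := fun x y => nabla x (P y) - P (nabla x y)
    let F : X → X → X → ℝ := fun x y z => g (nablaP x y) z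
    let tnablaP : X → X → X := fun x y => tnabla x (P y) - P (tnabla x y)
    let gt : X → X → ℝ := fun x y => g x (P y)
    let Ft : X → X → X → ℝ := fun x y z => gt (tnablaP x y) z
    -- the W₃ condition
    (∀ x y z : X, F x y z + F y z x + F z x y = 0) →
    -- the vanishing of N̄, equivalent to the W₃ condition
    (∀ x y : X, nablaP x (P y) + nablaP (P x) y + nablaP y (P x) + nablaP (P y) x = 0) →
    -- the formula for the associated Levi-Civita connection
    (∀ x y : X, tnabla x y = nabla x y - nablaP x (P y) - nablaP y (P x)) →
    (∀ x y : X, tnablaP x y = nablaP (P x) (P y)) ∧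
    (∀ x y z : X, Ft x y z = - F (P x) y z) := by
  intro nablaP F tnablaP gt Ft _ hN htnabla
  have htnablaP : ∀ x y, tnablaP x y = nablaP (P x) (P y) :=
    derivEndo_of_nbar_eq_zero hP2 hN htnabla
  refine ⟨htnablaP, fun x y z => ?_⟩
  show g (tnablaP x y) (P z) = -g (nablaP (P x) y) z
  rw [htnablaP, show nablaP (P x) (P y) = -P (nablaP (P x) y) from
    derivEndo_map_eq_neg_map hP2 _ _, map_neg, LinearMap.neg_apply, hPg]

/-- Let `(M,P,g)` be a Riemannian `W₃`-manifold and `∇̃` the Levi-Civita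
connection of the associated metric `g̃(x,y) = g(x,Py)`.  Then
`(∇̃ₓP)y = (∇_{Px}P)Py`, and consequently
`F̃(x,y,z) := g̃((∇̃ₓP)y, z) = −F(Px,y,z)`.
(The `W₃` condition is equivalent to `N̄ = 0`, and `∇̃` satisfies
`∇̃ₓy = ∇ₓy − (∇ₓP)Py − (∇_yP)Px`.) -/
theorem associated_nablaP_and_F
    {X : Type*} [AddCommGroup X] [Module ℝ X]
    (g : X →ₗ[ℝ] X →ₗ[ℝ] ℝ) (P : X →ₗ[ℝ] X)
    (nabla tnabla : X → X → X) (D : X → ℝ → ℝ)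
    (hgsymm : ∀ x y : X, g x y = g y x)
    (hP2 : ∀ x : X, P (P x) = x)
    (hPg : ∀ x y : X, g (P x) (P y) = g x y)
    (hcompat : ∀ x y z : X, D x (g y z) = g (nabla x y) z + g y (nabla x z)) :
    let nablaP : X → X → X := fun x y => nabla x (P y) - P (nabla x y)
    let F : X → X → X → ℝ := fun x y z => g (nablaP x y) z
    let tnablaP : X → X → X := fun x y => tnabla x (P y) - P (tnabla x y)
    let gt : X → X → ℝ := fun x y => g x (P y)
    let Ft : X → X → X → ℝ := fun x y z => gt (tnablaP x y) z
    -- the W₃ condition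
    (∀ x y z : X, F x y z + F y z x + F z x y = 0) →
    -- the vanishing of N̄, equivalent to the W₃ condition
    (∀ x y : X, nablaP x (P y) + nablaP (P x) y + nablaP y (P x) + nablaP (P y) x = 0) →
    -- the formula for the associated Levi-Civita connection
    (∀ x y : X, tnabla x y = nabla x y - nablaP x (P y) - nablaP y (P x)) →
    (∀ x y : X, tnablaP x y = nablaP (P x) (P y)) ∧
    (∀ x y z : X, Ft x y z = - F (P x) y z) :=
  associated_nablaP_and_F_general g P nabla tnabla hP2 hPg
end

section
/- Let (M,P,g) be a Riemannian W₃-manifold on which the invariant tensor L(x,y)z = R(x,y)z + ½Q(x,y)z vanishes, where Q(x,y)z = (∇ₓT)(y,z) − (∇_yT)(x,z) + T(x,T(y,z)) − T(y,T(x,z)) and T(x,y) = −(∇ₓP)Py − (∇_yP)Px. Then ‖∇P‖² = −8τ and τ** = 5τ, where τ is the scalar curvature and τ** = g^{ij}g^{kl}R(e_i,e_k,Pe_l,Pe_j). -/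
/-!
Write `∇F(x,y,z,w) = g((∇²_{x,y}P)z, w)`. Pairing `L(x,y)z = 0` with `Pw` and substituting the
Ricci identity gives, pointwise,
`R(x,y,z,Pw) + R(x,y,Pz,w) + ∇F(x,z,y,w) − ∇F(y,z,x,w) = g(T(y,z), PT(x,w)) − g(T(x,z), PT(y,w))`.
The tensor `T` is symmetric and, by `N̄ = 0`, satisfies `T(Px,y) = −T(x,Py)`; hence in each of the
three traces of this identity that we take, every quadratic term is antisymmetric under a
symmetry of the trace and drops out. What remains are linear relations between `τ`, `τ**`, two
mixed traces of `R` and seven traces of `∇F`. Further relations come from the derivative of the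
`W₃` cyclic condition, from differentiating `F(x,Py,z) = −F(x,y,Pz)` (which brings in `‖∇P‖²`),
from the Ricci identity and from the Bianchi identity. Since `∇ₓ` is not assumed linear in `x`,
traces with `P` in different slots cannot be identified, so all these traces are kept apart;
eliminating them leaves `3‖∇P‖² = τ − 5τ**`, and `‖∇P‖² = 2(τ − τ**)` finishes the proof.
-/

open Finset

/-- A Riemannian almost product structure `(g, P)` with a covariant derivative `nabla`, seen at a
point: `D x` stands for differentiation of functions along `x`, and `ginv` is the inverse Gram
matrix of the frame `b`. -/
structure AlmostProductFrame (X ι : Type*) [AddCommGroup X] [Module ℝ X] [Fintype ι]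
    [DecidableEq ι] where
  g : X →ₗ[ℝ] X →ₗ[ℝ] ℝ
  P : X →ₗ[ℝ] X
  nabla : X → X → X
  D : X → ℝ → ℝ
  b : Module.Basis ι ℝ X
  ginv : ι → ι → ℝ
  g_comm : ∀ x y, g x y = g y x
  P_P : ∀ x, P (P x) = x
  g_P_P : ∀ x y, g (P x) (P y) = g x y
  D_add : ∀ x a c, D x (a + c) = D x a + D x c
  D_g : ∀ x y z, D x (g y z) = g (nabla x y) z + g y (nabla x z)
  gram_mul_ginv : ∀ i k, ∑ j, g (b i) (b j) * ginv j k = if i = k then 1 else 0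
  ginv_comm : ∀ i j, ginv i j = ginv j i

namespace AlmostProductFrame

variable {X ι : Type*} [AddCommGroup X] [Module ℝ X] [Fintype ι] [DecidableEq ι]
  (M : AlmostProductFrame X ι)

noncomputable def contr (B : X → X → ℝ) : ℝ := ∑ i, ∑ j, M.ginv i j * B (M.b i) (M.b j)

/-- `g^{ij} g^{kl} K(e_i, e_j, e_k, e_l)`. -/
noncomputable def contr₂ (K : X → X → X → X → ℝ) : ℝ := M.contr fun x y => M.contr (K x y)

variable {M}

theorem contr_add (B B' : X → X → ℝ) :
    M.contr (fun x y => B x y + B' x y) = M.contr B + M.contr B' := by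
  simp only [contr, mul_add, sum_add_distrib]

theorem contr_sub (B B' : X → X → ℝ) :
    M.contr (fun x y => B x y - B' x y) = M.contr B - M.contr B' := by
  simp only [contr, mul_sub, sum_sub_distrib]

theorem contr_neg (B : X → X → ℝ) : M.contr (fun x y => -B x y) = -M.contr B := by
  simp only [contr, mul_neg, sum_neg_distrib]

theorem contr_swap (B : X → X → ℝ) : M.contr (fun x y => B y x) = M.contr B := by
  rw [contr, sum_comm]
  exact sum_congr rfl fun i _ => sum_congr rfl fun j _ => by rw [M.ginv_comm]

theorem contr_eq_sum_prod (B : X → X → ℝ) :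
    M.contr B = ∑ p : ι × ι, M.ginv p.1 p.2 * B (M.b p.1) (M.b p.2) :=
  (Fintype.sum_prod_type' _).symm

theorem contr₂_eq_sum (K : X → X → X → X → ℝ) :
    M.contr₂ K = ∑ i, ∑ j, ∑ k, ∑ l,
      M.ginv i j * M.ginv k l * K (M.b i) (M.b j) (M.b k) (M.b l) := by
  simp only [contr₂, contr, mul_sum, mul_assoc]

theorem contr₂_congr {K K' : X → X → X → X → ℝ} (h : ∀ x y u v, K x y u v = K' x y u v) :
    M.contr₂ K = M.contr₂ K' := by
  congr 1
  funext x y u v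
  exact h x y u v

theorem contr₂_eq_zero_of_forall {K : X → X → X → X → ℝ} (h : ∀ x y u v, K x y u v = 0) :
    M.contr₂ K = 0 := by
  simp only [contr₂, contr, h, mul_zero, sum_const_zero]

theorem contr₂_add (K K' : X → X → X → X → ℝ) :
    M.contr₂ (fun x y u v => K x y u v + K' x y u v) = M.contr₂ K + M.contr₂ K' := by
  simp only [contr₂, contr_add]

theorem contr₂_sub (K K' : X → X → X → X → ℝ) :
    M.contr₂ (fun x y u v => K x y u v - K' x y u v) = M.contr₂ K - M.contr₂ K' := by
  simp only [contr₂, contr_sub]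

theorem contr₂_neg (K : X → X → X → X → ℝ) :
    M.contr₂ (fun x y u v => -K x y u v) = -M.contr₂ K := by
  simp only [contr₂, contr_neg]

theorem contr₂_swap_left (K : X → X → X → X → ℝ) :
    M.contr₂ (fun x y u v => K y x u v) = M.contr₂ K :=
  contr_swap _

theorem contr₂_swap_right (K : X → X → X → X → ℝ) :
    M.contr₂ (fun x y u v => K x y v u) = M.contr₂ K := by
  simp only [contr₂, contr_swap (K _ _)]

theorem contr₂_comm (K : X → X → X → X → ℝ) :
    M.contr₂ (fun x y u v => K u v x y) = M.contr₂ K := by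
  simp only [contr₂, contr_eq_sum_prod, mul_sum]
  rw [sum_comm]
  exact sum_congr rfl fun _ _ => sum_congr rfl fun _ _ => by ring

theorem contr₂_reverse (K : X → X → X → X → ℝ) :
    M.contr₂ (fun x y u v => K v u y x) = M.contr₂ K :=
  (contr₂_swap_left fun x y u v => K v u x y).trans
    ((contr₂_swap_right fun x y u v => K u v x y).trans (contr₂_comm K))

theorem contr₂_eq_of_swap_left {K K' : X → X → X → X → ℝ}
    (h : ∀ x y u v, K x y u v = K' y x u v) : M.contr₂ K = M.contr₂ K' :=
  (contr₂_congr h).trans (contr₂_swap_left K')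

theorem contr₂_eq_of_swap_right {K K' : X → X → X → X → ℝ}
    (h : ∀ x y u v, K x y u v = K' x y v u) : M.contr₂ K = M.contr₂ K' :=
  (contr₂_congr h).trans (contr₂_swap_right K')

theorem contr₂_eq_of_comm {K K' : X → X → X → X → ℝ}
    (h : ∀ x y u v, K x y u v = K' u v x y) : M.contr₂ K = M.contr₂ K' :=
  (contr₂_congr h).trans (contr₂_comm K')

theorem contr₂_eq_zero_of_swap_left {K : X → X → X → X → ℝ}
    (h : ∀ x y u v, K y x u v = -K x y u v) : M.contr₂ K = 0 := by
  have := contr₂_swap_left (M := M) K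
  rw [contr₂_congr h, contr₂_neg] at this
  linarith

theorem contr₂_eq_zero_of_swap_right {K : X → X → X → X → ℝ}
    (h : ∀ x y u v, K x y v u = -K x y u v) : M.contr₂ K = 0 := by
  have := contr₂_swap_right (M := M) K
  rw [contr₂_congr h, contr₂_neg] at this
  linarith

theorem contr₂_eq_zero_of_reverse {K : X → X → X → X → ℝ}
    (h : ∀ x y u v, K v u y x = -K x y u v) : M.contr₂ K = 0 := by
  have := contr₂_reverse (M := M) K
  rw [contr₂_congr h, contr₂_neg] at this
  linarith

variable (M)

def nablaP (x y : X) : X := M.nabla x (M.P y) - M.P (M.nabla x y)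

def nabla2P (x y z : X) : X :=
  M.nabla x (M.nablaP y z) - M.nablaP (M.nabla x y) z - M.nablaP y (M.nabla x z)

def nablaF (x y z w : X) : ℝ := M.g (M.nabla2P x y z) w

def T (x y : X) : X := -M.nablaP x (M.P y) - M.nablaP y (M.P x)

def nablaT (x y z : X) : X := M.nabla x (M.T y z) - M.T (M.nabla x y) z - M.T y (M.nabla x z)

def Q (x y z : X) : X := M.nablaT x y z - M.nablaT y x z + M.T x (M.T y z) - M.T y (M.T x z)

noncomputable def normSqNablaP : ℝ := M.contr₂ fun x y u v => M.g (M.nablaP x u) (M.nablaP y v)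

noncomputable def scalarCurv (Rm : X → X → X → X) : ℝ :=
  M.contr₂ fun x y u v => M.g (Rm x u v) y

/-- `τ**` -/
noncomputable def scalarCurvStar (Rm : X → X → X → X) : ℝ :=
  M.contr₂ fun x y u v => M.g (Rm x u (M.P v)) (M.P y)

structure IsW3 : Prop where
  cyclic : ∀ x y z, M.g (M.nablaP x y) z + M.g (M.nablaP y z) x + M.g (M.nablaP z x) y = 0
  nbar : ∀ x y,
    M.nablaP x (M.P y) + M.nablaP (M.P x) y + M.nablaP y (M.P x) + M.nablaP (M.P y) x = 0

structure IsCurvature (Rm : X → X → X → X) : Prop where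
  ricci : ∀ x y z, M.nabla2P x y z - M.nabla2P y x z = Rm x y (M.P z) - M.P (Rm x y z)
  antisymm_left : ∀ x y z w, M.g (Rm x y z) w = -M.g (Rm y x z) w
  antisymm_right : ∀ x y z w, M.g (Rm x y z) w = -M.g (Rm x y w) z
  pair_comm : ∀ x y z w, M.g (Rm x y z) w = M.g (Rm z w x) y
  bianchi : ∀ x y z w, M.g (Rm x y z) w + M.g (Rm y z x) w + M.g (Rm z x y) w = 0

theorem g_P_left (x y : X) : M.g (M.P x) y = M.g x (M.P y) := by
  simpa only [M.P_P] using M.g_P_P x (M.P y)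

theorem eq_zero_of_forall_g_eq_zero {v : X} (hv : ∀ w, M.g v w = 0) : v = 0 := by
  refine M.b.ext_elem fun k => ?_
  have hk : ∑ j, M.g v (M.b j) * M.ginv j k = M.b.repr v k := by
    conv_lhs => rw [← M.b.sum_repr v]
    simp only [map_sum, map_smul, LinearMap.sum_apply, LinearMap.smul_apply, smul_eq_mul,
      sum_mul, mul_assoc]
    rw [sum_comm]
    simp [← mul_sum, M.gram_mul_ginv]
  simp [← hk, hv]

theorem nabla_add (x y z : X) : M.nabla x (y + z) = M.nabla x y + M.nabla x z := by
  rw [← sub_eq_zero]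
  refine M.eq_zero_of_forall_g_eq_zero fun w => ?_
  have h := M.D_g x (y + z) w
  rw [map_add, LinearMap.add_apply, LinearMap.add_apply, M.D_add, M.D_g, M.D_g] at h
  simp only [map_sub, map_add, LinearMap.sub_apply, LinearMap.add_apply]
  linarith

theorem D_zero (x : X) : M.D x 0 = 0 :=
  (AddMonoidHom.mk' (M.D x) (M.D_add x)).map_zero

theorem D_neg (x : X) (a : ℝ) : M.D x (-a) = -M.D x a :=
  (AddMonoidHom.mk' (M.D x) (M.D_add x)).map_neg a

theorem nablaP_P (x y : X) : M.nablaP x (M.P y) = -M.P (M.nablaP x y) := by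
  simp only [nablaP, M.P_P, map_sub]
  abel

theorem nablaP_add (x y z : X) : M.nablaP x (y + z) = M.nablaP x y + M.nablaP x z := by
  simp only [nablaP, map_add, nabla_add]
  abel

theorem nabla_P (x y : X) : M.nabla x (M.P y) = M.nablaP x y + M.P (M.nabla x y) := by
  simp [nablaP]

theorem g_nablaP_comm (x y z : X) : M.g (M.nablaP x y) z = M.g (M.nablaP x z) y := by
  have e : ∀ y z, M.g (M.nablaP x y) z
      = M.D x (M.g (M.P y) z) - M.g (M.P y) (M.nabla x z) - M.g (M.nabla x y) (M.P z) := by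
    intro y z
    simp only [nablaP, map_sub, LinearMap.sub_apply]
    rw [M.g_P_left (M.nabla x y)]
    linarith [M.D_g x (M.P y) z]
  rw [e, e, M.g_P_left y z, M.g_comm y, M.g_comm (M.P y), M.g_comm (M.nabla x y)]
  ring

theorem g_nablaP_P (x y z : X) :
    M.g (M.nablaP x (M.P y)) z = -M.g (M.nablaP x y) (M.P z) := by
  rw [nablaP_P, map_neg, LinearMap.neg_apply, g_P_left]

theorem nablaF_eq (x y z w : X) : M.nablaF x y z w
    = M.D x (M.g (M.nablaP y z) w) - M.g (M.nablaP y z) (M.nabla x w)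
      - M.g (M.nablaP (M.nabla x y) z) w - M.g (M.nablaP y (M.nabla x z)) w := by
  simp only [nablaF, nabla2P, map_sub, LinearMap.sub_apply]
  linarith [M.D_g x (M.nablaP y z) w]

theorem nablaF_comm (x y z w : X) : M.nablaF x y z w = M.nablaF x y w z := by
  rw [nablaF_eq, nablaF_eq, M.g_nablaP_comm y z w, M.g_nablaP_comm y z (M.nabla x w),
    M.g_nablaP_comm (M.nabla x y) z w, M.g_nablaP_comm y (M.nabla x z) w]
  ring

theorem nablaF_P (x y z w : X) :
    M.nablaF x y (M.P z) w + M.nablaF x y z (M.P w)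
      + M.g (M.nablaP y w) (M.nablaP x z) + M.g (M.nablaP y z) (M.nablaP x w) = 0 := by
  simp only [nablaF_eq, nabla_P, nablaP_add, map_add, LinearMap.add_apply, g_nablaP_P, D_neg]
  rw [M.g_nablaP_comm y (M.nablaP x z) w]
  ring

theorem T_comm (x y : X) : M.T x y = M.T y x := by
  simp only [T]
  abel

theorem P_T (x y : X) : M.P (M.T x y) = M.nablaP x y + M.nablaP y x := by
  simp only [T, nablaP_P, map_sub, map_neg, M.P_P]
  abel

theorem g_T_P (x y w : X) : M.g (M.T x y) (M.P w) = M.g (M.nablaP x y + M.nablaP y x) w := by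
  rw [← g_P_left, P_T]

theorem g_nablaT_P (x y z w : X) :
    M.g (M.nablaT x y z) (M.P w)
      = M.nablaF x y z w + M.nablaF x z y w - M.g (M.T y z) (M.nablaP x w) := by
  have hD := M.D_g x (M.T y z) (M.P w)
  simp only [nablaT, map_sub, map_add, LinearMap.sub_apply, LinearMap.add_apply, nabla_P, g_T_P,
    M.D_add, nablaF_eq] at hD ⊢
  linarith

theorem contr₂_nablaF_P_left :
    M.contr₂ (fun x y u v => M.nablaF x y (M.P u) v) = -M.normSqNablaP := by
  have h := contr₂_eq_zero_of_forall (M := M) fun x y u v => M.nablaF_P x y u v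
  simp only [contr₂_add] at h
  have e₂ : M.contr₂ (fun x y u v => M.nablaF x y u (M.P v))
      = M.contr₂ (fun x y u v => M.nablaF x y (M.P u) v) :=
    contr₂_eq_of_swap_right fun x y u v => M.nablaF_comm x y u (M.P v)
  have e₃ : M.contr₂ (fun x y u v => M.g (M.nablaP y v) (M.nablaP x u)) = M.normSqNablaP :=
    contr₂_congr fun x y u v => M.g_comm _ _
  have e₄ : M.contr₂ (fun x y u v => M.g (M.nablaP y u) (M.nablaP x v)) = M.normSqNablaP :=
    contr₂_eq_of_swap_left fun x y u v => rfl
  linarith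

variable {M}

theorem nablaF_cyclic (hW : M.IsW3) (x y z w : X) :
    M.nablaF x y z w + M.nablaF x z w y + M.nablaF x w y z = 0 := by
  have hD : M.D x (M.g (M.nablaP y z) w) + M.D x (M.g (M.nablaP z w) y)
      + M.D x (M.g (M.nablaP w y) z) = 0 := by
    rw [← M.D_add, ← M.D_add, hW.cyclic, D_zero]
  simp only [nablaF_eq]
  linear_combination hD - hW.cyclic y z (M.nabla x w) - hW.cyclic (M.nabla x y) z w
    - hW.cyclic y (M.nabla x z) w

theorem T_P_left (hW : M.IsW3) (x y : X) : M.T (M.P x) y = -M.T x (M.P y) := by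
  have h := hW.nbar x (M.P y)
  simp only [M.P_P] at h
  simp only [T, M.P_P]
  linear_combination (norm := module) -h

theorem g_T_P_of_isW3 (hW : M.IsW3) (x t w : X) :
    M.g (M.T x t) (M.P w) = -M.g (M.nablaP w x) t := by
  rw [g_T_P, map_add, LinearMap.add_apply, M.g_nablaP_comm t x w]
  linarith [hW.cyclic w x t]

theorem g_Q_P (hW : M.IsW3) (x y z w : X) :
    M.g (M.Q x y z) (M.P w)
      = M.nablaF x y z w + M.nablaF x z y w - M.nablaF y x z w - M.nablaF y z x w
        - M.g (M.T y z) (M.P (M.T x w)) + M.g (M.T x z) (M.P (M.T y w)) := by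
  simp only [Q, map_sub, map_add, LinearMap.sub_apply, LinearMap.add_apply, g_nablaT_P]
  rw [g_T_P_of_isW3 hW x (M.T y z) w, g_T_P_of_isW3 hW y (M.T x z) w, P_T, P_T, map_add,
    map_add, M.g_comm (M.nablaP w x), M.g_comm (M.nablaP w y)]
  ring

theorem contr₂_nablaF_cyclic (hW : M.IsW3) :
    M.contr₂ (fun x y u v => M.nablaF x y (M.P u) v)
      + M.contr₂ (fun x y u v => M.nablaF x u y (M.P v))
      + M.contr₂ (fun x y u v => M.nablaF x (M.P u) y v) = 0 := by
  have h := contr₂_eq_zero_of_forall (M := M) fun x y u v => nablaF_cyclic hW x y (M.P u) v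
  simp only [contr₂_add] at h
  have e₂ : M.contr₂ (fun x y u v => M.nablaF x (M.P u) v y)
      = M.contr₂ (fun x y u v => M.nablaF x (M.P u) y v) :=
    contr₂_congr fun x y u v => M.nablaF_comm x (M.P u) v y
  have e₃ : M.contr₂ (fun x y u v => M.nablaF x v y (M.P u))
      = M.contr₂ (fun x y u v => M.nablaF x u y (M.P v)) :=
    contr₂_eq_of_swap_right fun x y u v => rfl
  linarith

theorem contr₂_nablaF_cyclic_trace (hW : M.IsW3) (a c : X → X → X) :
    M.contr₂ (fun x y u v => M.nablaF (a x y) (c x y) u v)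
      + 2 * M.contr₂ (fun x y u v => M.nablaF (a x y) u (c x y) v) = 0 := by
  have h := contr₂_eq_zero_of_forall (M := M) fun x y u v => nablaF_cyclic hW (a x y) (c x y) u v
  simp only [contr₂_add] at h
  have e₂ : M.contr₂ (fun x y u v => M.nablaF (a x y) u v (c x y))
      = M.contr₂ (fun x y u v => M.nablaF (a x y) u (c x y) v) :=
    contr₂_congr fun x y u v => M.nablaF_comm _ _ _ _
  have e₃ : M.contr₂ (fun x y u v => M.nablaF (a x y) v (c x y) u)
      = M.contr₂ (fun x y u v => M.nablaF (a x y) u (c x y) v) :=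
    contr₂_eq_of_swap_right fun x y u v => rfl
  linarith

variable {Rm : X → X → X → X}

theorem nablaF_sub_swap (hR : M.IsCurvature Rm) (x y z w : X) :
    M.nablaF x y z w - M.nablaF y x z w = M.g (Rm x y (M.P z)) w - M.g (Rm x y z) (M.P w) := by
  have h := congrArg (fun v => M.g v w) (hR.ricci x y z)
  simp only [map_sub, LinearMap.sub_apply, g_P_left] at h
  exact h

theorem curv_add_nablaF_of_L_eq_zero (hW : M.IsW3) (hR : M.IsCurvature Rm)
    (hL : ∀ x y z, Rm x y z + (1 / 2 : ℝ) • M.Q x y z = 0) (x y z w : X) :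
    M.g (Rm x y z) (M.P w) + M.g (Rm x y (M.P z)) w + M.nablaF x z y w - M.nablaF y z x w
      = M.g (M.T y z) (M.P (M.T x w)) - M.g (M.T x z) (M.P (M.T y w)) := by
  have h := congrArg (fun v => M.g v (M.P w)) (hL x y z)
  simp only [map_add, map_smul, LinearMap.add_apply, LinearMap.smul_apply, smul_eq_mul, map_zero,
    LinearMap.zero_apply, g_Q_P hW] at h
  linear_combination 2 * h - nablaF_sub_swap hR x y z w

theorem contr₂_ricci_P_y (hR : M.IsCurvature Rm) :
    M.contr₂ (fun x y u v => M.nablaF x (M.P y) u v)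
      - M.contr₂ (fun x y u v => M.nablaF (M.P x) y u v)
      = 2 * M.contr₂ (fun x y u v => M.g (Rm x (M.P y) (M.P u)) v) := by
  have h := contr₂_congr (M := M) fun x y u v => nablaF_sub_swap hR x (M.P y) u v
  simp only [contr₂_sub] at h
  have e₂ : M.contr₂ (fun x y u v => M.nablaF (M.P y) x u v)
      = M.contr₂ (fun x y u v => M.nablaF (M.P x) y u v) :=
    contr₂_eq_of_swap_left fun x y u v => rfl
  have e₄ : M.contr₂ (fun x y u v => M.g (Rm x (M.P y) u) (M.P v))
      = -M.contr₂ (fun x y u v => M.g (Rm x (M.P y) (M.P u)) v) := by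
    rw [← contr₂_neg]
    exact contr₂_eq_of_swap_right fun x y u v => hR.antisymm_right _ _ _ _
  linarith

theorem contr₂_ricci_P_v (hR : M.IsCurvature Rm) :
    M.contr₂ (fun x y u v => M.nablaF x u y (M.P v))
      - M.contr₂ (fun x y u v => M.nablaF x u (M.P y) v)
      = M.scalarCurv Rm - M.scalarCurvStar Rm := by
  have h := contr₂_congr (M := M) fun x y u v => nablaF_sub_swap hR x u y (M.P v)
  simp only [contr₂_sub] at h
  have e₂ : M.contr₂ (fun x y u v => M.nablaF u x y (M.P v))
      = M.contr₂ (fun x y u v => M.nablaF x u (M.P y) v) :=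
    contr₂_eq_of_comm fun x y u v => M.nablaF_comm u x y (M.P v)
  have e₃ : M.contr₂ (fun x y u v => M.g (Rm x u (M.P y)) (M.P v)) = -M.scalarCurvStar Rm := by
    rw [scalarCurvStar, ← contr₂_neg]
    exact contr₂_congr fun x y u v => hR.antisymm_right _ _ _ _
  have e₄ : M.contr₂ (fun x y u v => M.g (Rm x u y) (M.P (M.P v))) = -M.scalarCurv Rm := by
    rw [scalarCurv, ← contr₂_neg]
    exact contr₂_congr fun x y u v => by rw [M.P_P, hR.antisymm_right]
  linarith

theorem contr₂_ricci_P_u (hR : M.IsCurvature Rm) :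
    M.contr₂ (fun x y u v => M.nablaF x (M.P u) y v)
      - M.contr₂ (fun x y u v => M.nablaF (M.P x) u y v)
      = M.contr₂ (fun x y u v => M.g (Rm x (M.P u) (M.P v)) y)
        - M.contr₂ (fun x y u v => M.g (Rm x (M.P u) v) (M.P y)) := by
  have h := contr₂_congr (M := M) fun x y u v => nablaF_sub_swap hR x (M.P u) y v
  simp only [contr₂_sub] at h
  have e₂ : M.contr₂ (fun x y u v => M.nablaF (M.P u) x y v)
      = M.contr₂ (fun x y u v => M.nablaF (M.P x) u y v) :=
    contr₂_eq_of_comm fun x y u v => M.nablaF_comm (M.P u) x y v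
  have e₃ : M.contr₂ (fun x y u v => M.g (Rm x (M.P u) (M.P y)) v)
      = -M.contr₂ (fun x y u v => M.g (Rm x (M.P u) v) (M.P y)) := by
    rw [← contr₂_neg]
    exact contr₂_congr fun x y u v => hR.antisymm_right _ _ _ _
  have e₄ : M.contr₂ (fun x y u v => M.g (Rm x (M.P u) y) (M.P v))
      = -M.contr₂ (fun x y u v => M.g (Rm x (M.P u) (M.P v)) y) := by
    rw [← contr₂_neg]
    exact contr₂_congr fun x y u v => hR.antisymm_right _ _ _ _
  linarith

theorem contr₂_bianchi (hR : M.IsCurvature Rm) :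
    M.contr₂ (fun x y u v => M.g (Rm x (M.P y) (M.P u)) v)
      + M.contr₂ (fun x y u v => M.g (Rm x (M.P u) v) (M.P y)) = M.scalarCurvStar Rm := by
  have h := contr₂_eq_zero_of_forall (M := M) fun x y u v => hR.bianchi x (M.P y) (M.P u) v
  simp only [contr₂_add] at h
  have e₂ : M.contr₂ (fun x y u v => M.g (Rm (M.P y) (M.P u) x) v) = -M.scalarCurvStar Rm := by
    rw [scalarCurvStar, ← contr₂_neg]
    exact contr₂_eq_of_swap_right fun x y u v => by rw [hR.pair_comm, hR.antisymm_right]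
  have e₃ : M.contr₂ (fun x y u v => M.g (Rm (M.P u) x (M.P y)) v)
      = M.contr₂ (fun x y u v => M.g (Rm x (M.P u) v) (M.P y)) :=
    contr₂_congr fun x y u v => by rw [hR.antisymm_left, hR.antisymm_right, neg_neg]
  linarith



theorem contr₂_L_P_v (hW : M.IsW3) (hR : M.IsCurvature Rm)
    (hL : ∀ x y z, Rm x y z + (1 / 2 : ℝ) • M.Q x y z = 0) :
    M.scalarCurvStar Rm + M.scalarCurv Rm + M.contr₂ (fun x y u v => M.nablaF x (M.P u) y v)
      - M.contr₂ (fun x y u v => M.nablaF x (M.P y) u v) = 0 := by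
  have h := contr₂_congr (M := M) fun x y u v =>
    curv_add_nablaF_of_L_eq_zero hW hR hL x u (M.P v) y
  simp only [contr₂_add, contr₂_sub] at h
  have q₁ : M.contr₂ (fun x y u v => M.g (M.T u (M.P v)) (M.P (M.T x y))) = 0 :=
    contr₂_eq_zero_of_swap_right fun x y u v => by
      rw [M.T_comm v, T_P_left hW, map_neg, LinearMap.neg_apply]
  have q₂ : M.contr₂ (fun x y u v => M.g (M.T x (M.P v)) (M.P (M.T u y))) = 0 :=
    contr₂_eq_zero_of_reverse fun x y u v => by
      rw [M.T_comm v, T_P_left hW, M.T_comm y, map_neg, LinearMap.neg_apply]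
  have e₂ : M.contr₂ (fun x y u v => M.g (Rm x u (M.P (M.P v))) y) = M.scalarCurv Rm :=
    contr₂_congr fun x y u v => by rw [M.P_P]
  have e₃ : M.contr₂ (fun x y u v => M.nablaF x (M.P v) u y)
      = M.contr₂ (fun x y u v => M.nablaF x (M.P u) y v) :=
    contr₂_eq_of_swap_right fun x y u v => M.nablaF_comm x (M.P v) u y
  have e₄ : M.contr₂ (fun x y u v => M.nablaF u (M.P v) x y)
      = M.contr₂ (fun x y u v => M.nablaF x (M.P y) u v) :=
    contr₂_eq_of_comm fun x y u v => rfl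
  rw [scalarCurvStar]
  linarith

theorem contr₂_L_P_u (hW : M.IsW3) (hR : M.IsCurvature Rm)
    (hL : ∀ x y z, Rm x y z + (1 / 2 : ℝ) • M.Q x y z = 0) :
    M.contr₂ (fun x y u v => M.g (Rm x (M.P u) v) (M.P y))
      + M.contr₂ (fun x y u v => M.g (Rm x (M.P u) (M.P v)) y)
      + M.contr₂ (fun x y u v => M.nablaF x u y (M.P v))
      - M.contr₂ (fun x y u v => M.nablaF (M.P x) y u v) = 0 := by
  have h := contr₂_congr (M := M) fun x y u v =>
    curv_add_nablaF_of_L_eq_zero hW hR hL x (M.P u) v y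
  simp only [contr₂_add, contr₂_sub] at h
  have q₁ : M.contr₂ (fun x y u v => M.g (M.T (M.P u) v) (M.P (M.T x y))) = 0 :=
    contr₂_eq_zero_of_swap_right fun x y u v => by
      rw [T_P_left hW, M.T_comm v, map_neg, LinearMap.neg_apply]
  have q₂ : M.contr₂ (fun x y u v => M.g (M.T x v) (M.P (M.T (M.P u) y))) = 0 :=
    contr₂_eq_zero_of_reverse fun x y u v => by
      rw [M.T_comm v, T_P_left hW, M.T_comm y, map_neg, map_neg]
  have e₃ : M.contr₂ (fun x y u v => M.nablaF x v (M.P u) y)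
      = M.contr₂ (fun x y u v => M.nablaF x u y (M.P v)) :=
    contr₂_eq_of_swap_right fun x y u v => M.nablaF_comm x v (M.P u) y
  have e₄ : M.contr₂ (fun x y u v => M.nablaF (M.P u) v x y)
      = M.contr₂ (fun x y u v => M.nablaF (M.P x) y u v) :=
    contr₂_eq_of_comm fun x y u v => rfl
  linarith

theorem contr₂_L_P_x (hW : M.IsW3) (hR : M.IsCurvature Rm)
    (hL : ∀ x y z, Rm x y z + (1 / 2 : ℝ) • M.Q x y z = 0) :
    M.contr₂ (fun x y u v => M.g (Rm x (M.P u) (M.P v)) y)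
      + M.contr₂ (fun x y u v => M.g (Rm x (M.P u) v) (M.P y))
      + M.contr₂ (fun x y u v => M.nablaF (M.P x) u y v)
      - M.contr₂ (fun x y u v => M.nablaF x y (M.P u) v) = 0 := by
  have h := contr₂_congr (M := M) fun x y u v =>
    curv_add_nablaF_of_L_eq_zero hW hR hL (M.P x) u v y
  simp only [contr₂_add, contr₂_sub] at h
  have q₁ : M.contr₂ (fun x y u v => M.g (M.T u v) (M.P (M.T (M.P x) y))) = 0 :=
    contr₂_eq_zero_of_swap_left fun x y u v => by
      rw [T_P_left hW, M.T_comm y, map_neg, map_neg]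
  have q₂ : M.contr₂ (fun x y u v => M.g (M.T (M.P x) v) (M.P (M.T u y))) = 0 :=
    contr₂_eq_zero_of_reverse fun x y u v => by
      rw [T_P_left hW, M.T_comm v, M.T_comm y, map_neg, LinearMap.neg_apply]
  have e₁ : M.contr₂ (fun x y u v => M.g (Rm (M.P x) u v) (M.P y))
      = M.contr₂ (fun x y u v => M.g (Rm x (M.P u) (M.P v)) y) :=
    contr₂_eq_of_comm fun x y u v => by rw [hR.antisymm_left, hR.antisymm_right, neg_neg]
  have e₂ : M.contr₂ (fun x y u v => M.g (Rm (M.P x) u (M.P v)) y)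
      = M.contr₂ (fun x y u v => M.g (Rm x (M.P u) v) (M.P y)) :=
    contr₂_eq_of_comm fun x y u v => by rw [hR.antisymm_left, hR.antisymm_right, neg_neg]
  have e₃ : M.contr₂ (fun x y u v => M.nablaF (M.P x) v u y)
      = M.contr₂ (fun x y u v => M.nablaF (M.P x) u y v) :=
    contr₂_eq_of_swap_right fun x y u v => M.nablaF_comm (M.P x) v u y
  have e₄ : M.contr₂ (fun x y u v => M.nablaF u v (M.P x) y)
      = M.contr₂ (fun x y u v => M.nablaF x y (M.P u) v) :=
    contr₂_eq_of_comm fun x y u v => rfl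
  linarith

theorem three_mul_normSqNablaP_eq (hW : M.IsW3) (hR : M.IsCurvature Rm)
    (hL : ∀ x y z, Rm x y z + (1 / 2 : ℝ) • M.Q x y z = 0) :
    3 * M.normSqNablaP = M.scalarCurv Rm - 5 * M.scalarCurvStar Rm := by
  have hPy := contr₂_nablaF_cyclic_trace hW (fun x _ => x) (fun _ y => M.P y)
  have hPx := contr₂_nablaF_cyclic_trace hW (fun x _ => M.P x) (fun _ y => y)
  beta_reduce at hPy hPx
  linarith [M.contr₂_nablaF_P_left, contr₂_nablaF_cyclic hW, contr₂_ricci_P_y hR,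
    contr₂_ricci_P_v hR, contr₂_ricci_P_u hR, contr₂_bianchi hR, contr₂_L_P_v hW hR hL,
    contr₂_L_P_u hW hR hL, contr₂_L_P_x hW hR hL]

end AlmostProductFrame

open Finset in
/-- Corollary 5.4 of the paper.  Let `(M,P,g)` be a Riemannian `W₃`-manifold on
which the invariant tensor `L(x,y)z = R(x,y)z + ½Q(x,y)z` vanishes, where
`Q(x,y)z = (∇ₓT)(y,z) − (∇_yT)(x,z) + T(x,T(y,z)) − T(y,T(x,z))` and
`T(x,y) = −(∇ₓP)Py − (∇_yP)Px`.  Then `‖∇P‖² = −8τ` and `τ** = 5τ`. -/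
theorem L_zero_implies_norm_and_tau
    {X : Type*} [AddCommGroup X] [Module ℝ X]
    {ι : Type*} [Fintype ι] [DecidableEq ι]
    (g : X →ₗ[ℝ] X →ₗ[ℝ] ℝ) (P : X →ₗ[ℝ] X)
    (nabla : X → X → X) (D : X → ℝ → ℝ) (Rm : X → X → X → X)
    (b : Module.Basis ι ℝ X) (ginv : ι → ι → ℝ)
    (hgsymm : ∀ x y : X, g x y = g y x)
    (hP2 : ∀ x : X, P (P x) = x)
    (hPg : ∀ x y : X, g (P x) (P y) = g x y)
    (hDadd : ∀ x : X, ∀ a c : ℝ, D x (a + c) = D x a + D x c)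
    (hcompat : ∀ x y z : X, D x (g y z) = g (nabla x y) z + g y (nabla x z))
    (hginv : ∀ i k : ι, ∑ j, g (b i) (b j) * ginv j k = if i = k then 1 else 0)
    (hginvsymm : ∀ i j : ι, ginv i j = ginv j i) :
    let nablaP : X → X → X := fun x y => nabla x (P y) - P (nabla x y)
    let F : X → X → X → ℝ := fun x y z => g (nablaP x y) z
    let nabla2P : X → X → X → X := fun x y z =>
      nabla x (nablaP y z) - nablaP (nabla x y) z - nablaP y (nabla x z)
    let R4 : X → X → X → X → ℝ := fun x y z w => g (Rm x y z) w
    let rho : X → X → ℝ := fun y z => ∑ i, ∑ j, ginv i j * R4 (b i) y z (b j)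
    let tau : ℝ := ∑ k, ∑ l, ginv k l * rho (b k) (b l)
    let tauss : ℝ := ∑ i, ∑ j, ∑ k, ∑ l,
      ginv i j * ginv k l * R4 (b i) (b k) (P (b l)) (P (b j))
    let nP2 : ℝ := ∑ i, ∑ j, ∑ k, ∑ l,
      ginv i j * ginv k l * g (nablaP (b i) (b k)) (nablaP (b j) (b l))
    let T : X → X → X := fun x y => - nablaP x (P y) - nablaP y (P x)
    let nablaT : X → X → X → X := fun x y z =>
      nabla x (T y z) - T (nabla x y) z - T y (nabla x z)
    let Q : X → X → X → X := fun x y z =>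
      nablaT x y z - nablaT y x z + T x (T y z) - T y (T x z)
    -- Ricci identity
    (∀ x y z : X, nabla2P x y z - nabla2P y x z = Rm x y (P z) - P (Rm x y z)) →
    -- symmetries of the curvature tensor
    (∀ x y z w : X, R4 x y z w = - R4 y x z w) →
    (∀ x y z w : X, R4 x y z w = - R4 x y w z) →
    (∀ x y z w : X, R4 x y z w = R4 z w x y) →
    (∀ x y z w : X, R4 x y z w + R4 y z x w + R4 z x y w = 0) →
    -- the W₃ condition
    (∀ x y z : X, F x y z + F y z x + F z x y = 0) →
    -- the vanishing of N̄, equivalent to the W₃ condition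
    (∀ x y : X, nablaP x (P y) + nablaP (P x) y + nablaP y (P x) + nablaP (P y) x = 0) →
    -- the Lie form θ vanishes on W₃-manifolds
    (∀ z : X, ∑ i, ∑ j, ginv i j * F (b i) (b j) z = 0) →
    -- the identity ‖∇P‖² = 2(τ − τ**), valid on W₃-manifolds
    nP2 = 2 * (tau - tauss) →
    -- the vanishing of the invariant tensor L
    (∀ x y z : X, Rm x y z + (1 / 2 : ℝ) • Q x y z = 0) →
    nP2 = -8 * tau ∧ tauss = 5 * tau := by
  intro nablaP F nabla2P R4 rho tau tauss nP2 T nablaT Q hRic hR₁ hR₂ hR₃ hBianchi hW3 hNbar _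
    hnorm hL
  let M : AlmostProductFrame X ι :=
    ⟨g, P, nabla, D, b, ginv, hgsymm, hP2, hPg, hDadd, hcompat, hginv, hginvsymm⟩
  have hW : M.IsW3 := ⟨hW3, hNbar⟩
  have hR : M.IsCurvature Rm := ⟨hRic, hR₁, hR₂, hR₃, hBianchi⟩
  have key := AlmostProductFrame.three_mul_normSqNablaP_eq hW hR hL
  have hnP2 : nP2 = M.normSqNablaP :=
    (M.contr₂_eq_sum fun x y u v => g (nablaP x u) (nablaP y v)).symm
  have htau : tau = M.scalarCurv Rm :=
    AlmostProductFrame.contr₂_comm (M := M) fun x y u v => g (Rm x u v) y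
  have htauss : tauss = M.scalarCurvStar Rm :=
    (M.contr₂_eq_sum fun x y u v => g (Rm x u (P v)) (P y)).symm
  constructor <;> linarith
end
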